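/- For every real x with 0 ≤ x < 1 and every integer k ≥ 1, 0 ≤ ∑_{m=−k+1}^{∞} (exp(−2^{x−m}) − (1 − 2^{−m−k})^{2^{k+x}}) ≤ 2^{−x−k} · h(x), where h(x) = ∑_{m=−∞}^{∞} 2^{2x−2m} exp(−2^{x−m}). -/

import Mathlib

/-!
Write `a = 2^{k+x}` and `b = 2^{-j-1}`, so that the `j`-th summand is
`exp(-a b) - (1 - b)^a` with `a b = 2^{x-m}`, `m = j - k + 1`. Since
`-b - b² ≤ log (1 - b) ≤ -b` for `0 ≤ b ≤ 1/2`, this summand lies between `0` and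
`a b² exp(-a b) = a⁻¹ (a b)² exp(-a b)`, which is `2^{-x-k}` times the `m`-th term of `h(x)`.
These terms `t² exp(-t)`, `t = 2^{x-m}`, are summable over `m ∈ ℤ` (bounded by `t²` and by `6/t`),
and `j ↦ m` is injective, so summing over `j` gives at most `2^{-x-k} h(x)`.
-/

open Real

/-- `h(x) = ∑_{m=-∞}^{∞} 2^{2x-2m} exp(-2^{x-m})`, summed over all `m : ℤ`. -/
noncomputable def h (x : ℝ) : ℝ :=
  ∑' m : ℤ, (2 : ℝ) ^ (2 * x - 2 * (m : ℝ)) * Real.exp (-(2 : ℝ) ^ (x - (m : ℝ)))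

lemma neg_sub_sq_le_log_one_sub {b : ℝ} (hb0 : 0 ≤ b) (hb : b ≤ 1 / 2) :
    -b - b ^ 2 ≤ log (1 - b) := by
  rw [le_log_iff_exp_le (by linarith), show -b - b ^ 2 = -(b + b ^ 2) by ring, exp_neg,
    inv_le_iff_one_le_mul₀ (exp_pos _)]
  have hquad := quadratic_le_exp_of_nonneg (x := b + b ^ 2) (by positivity)
  nlinarith

lemma one_sub_rpow_le_exp_neg_mul {a b : ℝ} (ha : 0 ≤ a) (hb : b < 1) :
    (1 - b) ^ a ≤ exp (-(a * b)) := by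
  rw [rpow_def_of_pos (by linarith), exp_le_exp]
  nlinarith [log_le_sub_one_of_pos (show 0 < 1 - b by linarith)]

lemma exp_neg_mul_sub_one_sub_rpow_le {a b : ℝ} (ha : 0 ≤ a) (hb0 : 0 ≤ b) (hb : b ≤ 1 / 2) :
    exp (-(a * b)) - (1 - b) ^ a ≤ a * b ^ 2 * exp (-(a * b)) := by
  have hlower : exp (-(a * b)) * exp (-(a * b ^ 2)) ≤ (1 - b) ^ a := by
    rw [← exp_add, rpow_def_of_pos (by linarith), exp_le_exp]
    nlinarith [neg_sub_sq_le_log_one_sub hb0 hb]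
  nlinarith [add_one_le_exp (-(a * b ^ 2)), exp_pos (-(a * b))]

lemma sq_mul_exp_neg_le_div {t : ℝ} (ht : 0 < t) : t ^ 2 * exp (-t) ≤ 6 / t := by
  have hcube : t ^ 3 / 6 ≤ exp t := by
    simpa [Nat.factorial] using pow_div_factorial_le_exp (x := t) ht.le 3
  rw [le_div_iff₀ ht]
  calc t ^ 2 * exp (-t) * t = t ^ 3 / exp t := by rw [exp_neg]; ring
    _ ≤ 6 := by rw [div_le_iff₀ (exp_pos t)]; linarith

lemma summable_sq_two_rpow_mul_exp_neg (x : ℝ) :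
    Summable fun m : ℤ => ((2 : ℝ) ^ (x - m)) ^ 2 * exp (-(2 : ℝ) ^ (x - m)) := by
  apply Summable.of_nat_of_neg_add_one
  · refine Summable.of_nonneg_of_le (fun n => by positivity) (fun n => ?_)
      ((summable_geometric_of_lt_one (by norm_num) (by norm_num : (2⁻¹ : ℝ) ^ 2 < 1)).mul_left
        (((2 : ℝ) ^ x) ^ 2))
    have hpow : (2 : ℝ) ^ (x - ((n : ℤ) : ℝ)) = 2 ^ x * 2⁻¹ ^ n := by
      rw [Int.cast_natCast, rpow_sub two_pos, rpow_natCast, div_eq_mul_inv, inv_pow]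
    rw [hpow]
    calc (2 ^ x * 2⁻¹ ^ n) ^ 2 * exp (-(2 ^ x * 2⁻¹ ^ n))
        ≤ (2 ^ x * 2⁻¹ ^ n) ^ 2 * 1 := by
          gcongr; exact exp_le_one_iff.2 (neg_nonpos.2 (by positivity))
      _ = ((2 : ℝ) ^ x) ^ 2 * ((2⁻¹ : ℝ) ^ 2) ^ n := by
        rw [mul_one, mul_pow, ← pow_mul, ← pow_mul, mul_comm n]
  · refine Summable.of_nonneg_of_le (fun n => by positivity) (fun n => ?_)
      ((summable_geometric_of_lt_one (by norm_num) (by norm_num : (2⁻¹ : ℝ) < 1)).mul_left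
        (6 * ((2 : ℝ) ^ (x + 1))⁻¹))
    have hpow : (2 : ℝ) ^ (x - ((-(n + 1 : ℤ) : ℤ) : ℝ)) = 2 ^ (x + 1) * 2 ^ n := by
      rw [← rpow_natCast, ← rpow_add two_pos]
      push_cast
      ring_nf
    rw [hpow]
    calc _ ≤ 6 / (2 ^ (x + 1) * 2 ^ n) := sq_mul_exp_neg_le_div (by positivity)
      _ = 6 * ((2 : ℝ) ^ (x + 1))⁻¹ * 2⁻¹ ^ n := by rw [inv_pow]; field_simp

lemma h_eq_tsum (x : ℝ) :
    h x = ∑' m : ℤ, ((2 : ℝ) ^ (x - m)) ^ 2 * exp (-(2 : ℝ) ^ (x - m)) := by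
  refine tsum_congr fun m => ?_
  congr 1
  rw [← rpow_natCast, ← rpow_mul two_pos.le]
  push_cast
  ring_nf

lemma tsum_le_mul_tsum_of_le_comp_injective {ι κ : Type*} {f : ι → ℝ} {F : κ → ℝ} {i : ι → κ}
    {c : ℝ} (hc : 0 ≤ c) (hi : Function.Injective i) (hF : Summable F) (hF0 : ∀ m, 0 ≤ F m)
    (hf0 : ∀ j, 0 ≤ f j) (hf : ∀ j, f j ≤ c * F (i j)) :
    ∑' j, f j ≤ c * ∑' m, F m := by
  have hFi : Summable (F ∘ i) := hF.comp_injective hi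
  have hcFi : Summable fun j => c * F (i j) := hFi.mul_left c
  calc ∑' j, f j ≤ ∑' j, c * F (i j) := (hcFi.of_nonneg_of_le hf0 hf).tsum_le_tsum hf hcFi
    _ = c * ∑' j, F (i j) := tsum_mul_left
    _ ≤ c * ∑' m, F m := by gcongr; exact tsum_comp_le_tsum_of_inj hF hF0 hi

theorem error_sum_bounds_general (x : ℝ) (k : ℕ) :
    0 ≤ ∑' j : ℕ, (Real.exp (-(2 : ℝ) ^ (x + k - 1 - j))
        - (1 - (2 : ℝ)⁻¹ ^ (j + 1)) ^ ((2 : ℝ) ^ ((k : ℝ) + x))) ∧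
    (∑' j : ℕ, (Real.exp (-(2 : ℝ) ^ (x + k - 1 - j))
        - (1 - (2 : ℝ)⁻¹ ^ (j + 1)) ^ ((2 : ℝ) ^ ((k : ℝ) + x)))) ≤
      (2 : ℝ) ^ (-x - k) * h x := by
  set a : ℝ := (2 : ℝ) ^ ((k : ℝ) + x)
  have ha : 0 < a := by positivity
  have hb (j : ℕ) : (2 : ℝ)⁻¹ ^ (j + 1) ≤ 1 / 2 :=
    (pow_le_of_le_one (by norm_num) (by norm_num) j.succ_ne_zero).trans_eq (by norm_num)
  have hab (j : ℕ) : a * (2 : ℝ)⁻¹ ^ (j + 1) = 2 ^ (x - (((j : ℤ) - k + 1 : ℤ) : ℝ)) := by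
    rw [inv_pow, ← rpow_natCast, ← rpow_neg two_pos.le, ← rpow_add two_pos]
    push_cast
    ring_nf
  have hexp (j : ℕ) : (2 : ℝ) ^ (x + k - 1 - j) = a * (2 : ℝ)⁻¹ ^ (j + 1) := by
    rw [hab]; push_cast; ring_nf
  have hainv : a⁻¹ = (2 : ℝ) ^ (-x - k) := by
    rw [← rpow_neg two_pos.le]; ring_nf
  simp_rw [hexp]
  have hnonneg (j : ℕ) : 0 ≤ exp (-(a * (2 : ℝ)⁻¹ ^ (j + 1))) - (1 - (2 : ℝ)⁻¹ ^ (j + 1)) ^ a :=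
    sub_nonneg.2 (one_sub_rpow_le_exp_neg_mul ha.le (by linarith [hb j]))
  refine ⟨tsum_nonneg hnonneg, ?_⟩
  rw [h_eq_tsum, ← hainv]
  refine tsum_le_mul_tsum_of_le_comp_injective (inv_nonneg.2 ha.le)
    (i := fun j : ℕ => (j : ℤ) - k + 1) (fun _ _ => by simp) (summable_sq_two_rpow_mul_exp_neg x)
    (fun _ => by positivity) hnonneg (fun j => ?_)
  rw [← hab]
  calc _ ≤ a * ((2 : ℝ)⁻¹ ^ (j + 1)) ^ 2 * exp (-(a * (2 : ℝ)⁻¹ ^ (j + 1))) :=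
        exp_neg_mul_sub_one_sub_rpow_le ha.le (by positivity) (hb j)
    _ = _ := by field_simp

/-- For `0 ≤ x < 1` and integers `k ≥ 1`,
`0 ≤ ∑_{m=-k+1}^{∞} (exp(-2^{x-m}) - (1 - 2^{-m-k})^{2^{k+x}}) ≤ 2^{-x-k} h(x)`.
The sum is reindexed by `m = j - k + 1`, `j : ℕ`, so that `x - m = x + k - 1 - j`
and `-m - k = -(j+1)`; the exponent `2^{k+x}` is a real power. -/
theorem error_sum_bounds (x : ℝ) (hx0 : 0 ≤ x) (hx1 : x < 1)
    (k : ℕ) (hk : 1 ≤ k) :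
    0 ≤ ∑' j : ℕ, (Real.exp (-(2 : ℝ) ^ (x + k - 1 - j))
        - (1 - (2 : ℝ)⁻¹ ^ (j + 1)) ^ ((2 : ℝ) ^ ((k : ℝ) + x))) ∧
    (∑' j : ℕ, (Real.exp (-(2 : ℝ) ^ (x + k - 1 - j))
        - (1 - (2 : ℝ)⁻¹ ^ (j + 1)) ^ ((2 : ℝ) ^ ((k : ℝ) + x)))) ≤
      (2 : ℝ) ^ (-x - k) * h x :=
  error_sum_bounds_general x k
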